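/- The tetrahedron index satisfies the linear recursion (Lagrangian equation) q^{e/2} I_Δ(m+1, e)(q) + q^{−m/2} I_Δ(m, e+1)(q) − I_Δ(m,e)(q) = 0 for all integers m, e, as an identity in ℤ((q^{1/2})). -/

import Mathlib

/-!
Summand by summand, `T(m,e;n+1) = q^{e/2} T(m+1,e;n+1) + q^{-m/2} T(m,e+1;n)`: after pulling out
the common monomial `(-1)^{n+1} q^{(n+1)(n+2)/2 - (n+1+e/2)m - (n+1)}` this is the recursion
`1/(q;q)_n = (1 - q^{n+1})/(q;q)_{n+1}`. Summing over `n ∈ ℤ` and shifting `n ↦ n + 1` in the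
first and last sums gives the identity. All sums are finite in each degree, because the
exponent `n(n+1) - (2n+e)m` of the `n`-th summand grows quadratically in `|n|`.
-/

open HahnSeries

/-- `(q;q)_n = ∏_{i=1}^n (1−q^i)` as a power series in the variable `X = q^{1/2}`
(so `q = X²`). -/
noncomputable def qPochhammer' (n : ℕ) : PowerSeries ℤ :=
  ∏ i ∈ Finset.range n, (1 - (PowerSeries.X : PowerSeries ℤ) ^ (2 * (i + 1)))

/-- `1/(q;q)_n` as a formal Laurent series in `q^{1/2}`, with the convention that
it is `0` for `n < 0`. -/
noncomputable def qPochhammerInv (n : ℤ) : LaurentSeries ℤ :=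
  if n < 0 then 0
  else HahnSeries.ofPowerSeries ℤ ℤ (PowerSeries.invOfUnit (qPochhammer' n.toNat) 1)

/-- The `n`-th summand `(−1)^n q^{n(n+1)/2 − (n+e/2)m} / ((q;q)_n (q;q)_{n+e})`
of the tetrahedron index `I_Δ(m,e)(q)`, as a formal Laurent series in `q^{1/2}`:
the exponent of `q^{1/2}` is `n(n+1) − (2n+e)m`. -/
noncomputable def tetraTerm (m e n : ℤ) : LaurentSeries ℤ :=
  HahnSeries.single (n * (n + 1) - (2 * n + e) * m) ((((-1 : ℤˣ) ^ n : ℤˣ) : ℤ)) *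
    qPochhammerInv n * qPochhammerInv (n + e)

open PowerSeries in
theorem invOfUnit_qPochhammer'_eq_mul_succ (a : ℕ) :
    invOfUnit (qPochhammer' a) 1 =
      (1 - X ^ (2 * (a + 1))) * invOfUnit (qPochhammer' (a + 1)) 1 := by
  have inv (n : ℕ) : qPochhammer' n * invOfUnit (qPochhammer' n) 1 = 1 :=
    mul_invOfUnit _ 1 (by simp [qPochhammer'])
  have succ : qPochhammer' (a + 1) = qPochhammer' a * (1 - X ^ (2 * (a + 1))) :=
    Finset.prod_range_succ _ _
  have inv_succ := inv (a + 1)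
  nth_rw 1 [succ] at inv_succ
  linear_combination (1 - X ^ (2 * (a + 1))) * invOfUnit (qPochhammer' (a + 1)) 1 * inv a -
    invOfUnit (qPochhammer' a) 1 * inv_succ

/-- `1/(q;q)_n = (1 - q^{n+1})/(q;q)_{n+1}`; with the convention `1/(q;q)_n = 0` for `n < 0`
it holds for every integer `n`. -/
theorem qPochhammerInv_eq_mul_succ (n : ℤ) :
    qPochhammerInv n = (1 - single (2 * (n + 1)) 1) * qPochhammerInv (n + 1) := by
  obtain hn | rfl | hn := lt_trichotomy n (-1)
  · simp only [qPochhammerInv, if_pos (by omega : n < 0), if_pos (by omega : n + 1 < 0), mul_zero]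
  · simp [qPochhammerInv, qPochhammer']
  · lift n to ℕ using by omega
    have hpow : single (2 * ((n : ℤ) + 1)) (1 : ℤ) =
        ofPowerSeries ℤ ℤ (PowerSeries.X ^ (2 * (n + 1))) := by
      rw [ofPowerSeries_X_pow]; push_cast; rfl
    rw [qPochhammerInv, if_neg (by omega), qPochhammerInv, if_neg (by omega),
      show ((n : ℤ) + 1).toNat = n + 1 by omega, Int.toNat_natCast, hpow,
      ← map_one (ofPowerSeries ℤ ℤ), ← map_sub, ← map_mul, invOfUnit_qPochhammer'_eq_mul_succ]

theorem tetraTerm_succ_eq (m e n : ℤ) :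
    tetraTerm m e (n + 1) =
      single e 1 * tetraTerm (m + 1) e (n + 1) + single (-m) 1 * tetraTerm m (e + 1) n := by
  have sign : (((-1 : ℤˣ) ^ n : ℤˣ) : ℤ) = -(((-1 : ℤˣ) ^ (n + 1) : ℤˣ) : ℤ) := by
    rw [zpow_add_one]; push_cast; ring
  set E := (n + 1) * (n + 1 + 1) - (2 * (n + 1) + e) * m - 2 * (n + 1)
  have shift (r : ℤ) : single (E + 2 * (n + 1)) r = single E r * single (2 * (n + 1)) 1 := by
    rw [single_mul_single, mul_one]
  simp only [tetraTerm, ← mul_assoc, single_mul_single, one_mul, sign, single_neg, mul_neg, neg_mul]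
  rw [show e + ((n + 1) * (n + 1 + 1) - (2 * (n + 1) + e) * (m + 1)) = E by ring,
    show -m + (n * (n + 1) - (2 * n + (e + 1)) * m) = E by ring,
    show (n + 1) * (n + 1 + 1) - (2 * (n + 1) + e) * m = E + 2 * (n + 1) by ring,
    shift, qPochhammerInv_eq_mul_succ n,
    show n + (e + 1) = n + 1 + e by ring]
  ring

theorem exists_ofPowerSeries_eq_qPochhammerInv (n : ℤ) :
    ∃ f : PowerSeries ℤ, ofPowerSeries ℤ ℤ f = qPochhammerInv n := by
  unfold qPochhammerInv
  split_ifs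
  exacts [⟨0, map_zero _⟩, ⟨_, rfl⟩]

theorem coeff_tetraTerm_of_lt {m e n d : ℤ} (h : d < n * (n + 1) - (2 * n + e) * m) :
    (tetraTerm m e n).coeff d = 0 := by
  obtain ⟨f, hf⟩ := exists_ofPowerSeries_eq_qPochhammerInv n
  obtain ⟨g, hg⟩ := exists_ofPowerSeries_eq_qPochhammerInv (n + e)
  rw [tetraTerm, mul_assoc, ← hf, ← hg, ← (ofPowerSeries ℤ ℤ).map_mul, coeff_single_mul,
    PowerSeries.coeff_coe, if_pos (by omega), mul_zero]

theorem Int.lt_mul_add_of_abs_add_abs_lt {K c n : ℤ} (h : |K| + |c| < |n|) :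
    K < n * (n + c) := by
  rcases abs_cases n with ⟨hn, _⟩ | ⟨hn, _⟩ <;>
    nlinarith [le_abs_self K, neg_abs_le c, le_abs_self c, abs_nonneg K]

theorem summable_coeff_tetraTerm (m e d : ℤ) : Summable fun n ↦ (tetraTerm m e n).coeff d := by
  set N := |d + e * m| + |1 - 2 * m|
  refine summable_of_ne_finset_zero (s := Finset.Icc (-N) N) fun n hn ↦ coeff_tetraTerm_of_lt ?_
  have hN : N < |n| := by
    rw [Finset.mem_Icc, not_and_or, not_le, not_le] at hn
    rw [lt_abs]; omega
  linarith [Int.lt_mul_add_of_abs_add_abs_lt hN]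

theorem tsum_int_shift_add {α : Type*} [AddCommMonoid α] [TopologicalSpace α] [ContinuousAdd α]
    [T2Space α] {F G : ℤ → α} (hF : Summable F) (hG : Summable G) :
    ∑' n, (F (n + 1) + G n) = ∑' n, F n + ∑' n, G n := by
  have hF' : Summable fun n ↦ F (n + 1) := (Equiv.addRight 1).summable_iff.2 hF
  rw [hF'.tsum_add hG, ← (Equiv.addRight 1).tsum_eq F, Equiv.coe_addRight]

/-- the tetrahedron index satisfies the linear recursion (Lagrangian
equation) `q^{e/2} I_Δ(m+1,e)(q) + q^{−m/2} I_Δ(m,e+1)(q) − I_Δ(m,e)(q) = 0`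
as an identity in `ℤ((q^{1/2}))`, i.e. coefficientwise in every degree `d`
(`q^{e/2}` and `q^{−m/2}` are the monomials `single e 1` and `single (−m) 1` in
the variable `q^{1/2}`). -/
theorem tetrahedron_index_lagrangian (m e : ℤ) (d : ℤ) :
    (∑' n : ℤ, (HahnSeries.single e (1 : ℤ) * tetraTerm (m + 1) e n).coeff d) +
      (∑' n : ℤ, (HahnSeries.single (-m) (1 : ℤ) * tetraTerm m (e + 1) n).coeff d) -
      (∑' n : ℤ, (tetraTerm m e n).coeff d) = 0 := by
  have summable (a k l : ℤ) : Summable fun n ↦ (single a 1 * tetraTerm k l n).coeff d := by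
    simpa only [coeff_single_mul, one_mul] using summable_coeff_tetraTerm k l (d - a)
  rw [sub_eq_zero, ← tsum_int_shift_add (summable _ _ _) (summable _ _ _),
    ← (Equiv.addRight 1).tsum_eq fun n ↦ (tetraTerm m e n).coeff d]
  exact tsum_congr fun n ↦ by simp only [Equiv.coe_addRight, tetraTerm_succ_eq m e n, coeff_add]
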